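/- arXiv:1308.5045 — 4 statements merged into one kernel-verified Lean document; each statement's English description precedes it below -/
import Mathlib

section
/- Let A ∈ F^{m×m}, b ∈ F^{m×1} a column vector, c ∈ F^{1×m} a row vector over a field F. If rank(A) + 1 = rank [A b] = rank [A; c] (column-augmented and row-augmented matrices respectively), then rank(A + b·c) = rank(A) + 1. -/
/-!
Since `rank [A; c] > rank A`, the functional `c` does not vanish on `ker A`, so some `x` has
`A x = 0` and `c x = 1`. Then `b = (A + b c) x` lies in the column space of `A + b c`, hence so does
every column of `A = (A + b c) - b c`. Therefore `A + b c` and `[A b]` have the same column space,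
and `rank (A + b c) = rank [A b] = rank A + 1`.
-/

open Matrix

namespace Matrix

variable {R : Type*} {m n k n₁ n₂ : Type*} [Fintype n]

theorem range_mulVecLin_fromCols [CommSemiring R] [Fintype n₁] [Fintype n₂]
    (A : Matrix m n₁ R) (B : Matrix m n₂ R) :
    LinearMap.range (fromCols A B).mulVecLin =
      LinearMap.range A.mulVecLin ⊔ LinearMap.range B.mulVecLin := by
  ext y
  simp only [LinearMap.mem_range, Submodule.mem_sup, mulVecLin_apply, exists_exists_eq_and]
  constructor
  · rintro ⟨v, rfl⟩
    exact ⟨v ∘ Sum.inl, v ∘ Sum.inr, (fromCols_mulVec A B v).symm⟩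
  · rintro ⟨v₁, v₂, rfl⟩
    exact ⟨Sum.elim v₁ v₂, fromCols_mulVec_sumElim A B v₁ v₂⟩

theorem ker_mulVecLin_fromRows [CommSemiring R] (A : Matrix m n R) (C : Matrix k n R) :
    LinearMap.ker (fromRows A C).mulVecLin =
      LinearMap.ker A.mulVecLin ⊓ LinearMap.ker C.mulVecLin := by
  ext x
  simp only [LinearMap.mem_ker, Submodule.mem_inf, mulVecLin_apply, fromRows_mulVec]
  rw [← Sum.elim_zero_zero, Sum.elim_eq_iff]

theorem rank_eq_of_ker_mulVecLin_eq [Field R] {m' : Type*} {M : Matrix m n R}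
    {N : Matrix m' n R} (h : LinearMap.ker M.mulVecLin = LinearMap.ker N.mulVecLin) :
    M.rank = N.rank := by
  have hM := LinearMap.finrank_range_add_finrank_ker M.mulVecLin
  have hN := LinearMap.finrank_range_add_finrank_ker N.mulVecLin
  rw [h] at hM
  unfold rank
  omega

theorem rank_fromRows_eq_of_ker_le [Field R] {A : Matrix m n R} {C : Matrix k n R}
    (h : LinearMap.ker A.mulVecLin ≤ LinearMap.ker C.mulVecLin) :
    (fromRows A C).rank = A.rank :=
  rank_eq_of_ker_mulVecLin_eq <| by rw [ker_mulVecLin_fromRows, inf_eq_left.mpr h]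

theorem range_mulVecLin_add_mul [CommRing R] [Fintype k] (A : Matrix m n R)
    (B : Matrix m k R) (C : Matrix k n R)
    (hC : (LinearMap.ker A.mulVecLin).map C.mulVecLin = ⊤) :
    LinearMap.range (A + B * C).mulVecLin =
      LinearMap.range A.mulVecLin ⊔ LinearMap.range B.mulVecLin := by
  have hB : LinearMap.range B.mulVecLin ≤ LinearMap.range (A + B * C).mulVecLin := by
    rintro _ ⟨y, rfl⟩
    obtain ⟨x, hx, rfl⟩ : y ∈ (LinearMap.ker A.mulVecLin).map C.mulVecLin := hC ▸ trivial
    refine ⟨x, ?_⟩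
    simp only [SetLike.mem_coe, LinearMap.mem_ker, mulVecLin_apply] at hx ⊢
    rw [add_mulVec, hx, zero_add, mulVec_mulVec]
  refine le_antisymm ?_ (sup_le ?_ hB)
  · rintro _ ⟨x, rfl⟩
    rw [mulVecLin_apply, add_mulVec, ← mulVec_mulVec]
    exact Submodule.add_mem_sup ⟨x, rfl⟩ ⟨C *ᵥ x, rfl⟩
  · rintro _ ⟨x, rfl⟩
    have hA : A *ᵥ x = (A + B * C) *ᵥ x - B *ᵥ (C *ᵥ x) := by
      rw [add_mulVec, mulVec_mulVec, add_sub_cancel_right]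
    rw [mulVecLin_apply, hA]
    exact Submodule.sub_mem _ ⟨x, rfl⟩ (hB ⟨C *ᵥ x, rfl⟩)

end Matrix

theorem Submodule.eq_top_of_ne_bot_of_finrank_eq_one {K V : Type*} [DivisionRing K]
    [AddCommGroup V] [Module K V] (hV : Module.finrank K V = 1) {S : Submodule K V}
    (hS : S ≠ ⊥) : S = ⊤ :=
  haveI := isSimpleModule_iff_finrank_eq_one.mpr hV
  (eq_bot_or_eq_top S).resolve_left hS

theorem stmt_1 {F : Type*} [Field F] {m : ℕ}
    (A : Matrix (Fin m) (Fin m) F) (b : Matrix (Fin m) (Fin 1) F)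
    (c : Matrix (Fin 1) (Fin m) F)
    (hb : A.rank + 1 = (fromCols A b).rank)
    (hc : A.rank + 1 = (fromRows A c).rank) :
    (A + b * c).rank = A.rank + 1 := by
  have hker : ¬ LinearMap.ker A.mulVecLin ≤ LinearMap.ker c.mulVecLin := fun h => by
    rw [rank_fromRows_eq_of_ker_le h] at hc
    omega
  have hc_surj : (LinearMap.ker A.mulVecLin).map c.mulVecLin = ⊤ :=
    Submodule.eq_top_of_ne_bot_of_finrank_eq_one (by simp)
      (mt LinearMap.le_ker_iff_map.mpr hker)
  rw [hb, rank, rank, range_mulVecLin_add_mul A b c hc_surj, range_mulVecLin_fromCols]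
end

section
/- Let A ∈ F^{m×m}, B ∈ F^{m×r}, C ∈ F^{q×m} over an infinite field F. Then the maximum over all K ∈ F^{r×q} of rank(A + B K C) equals min{ rank [A B], rank [A; C] }, where [A B] is the column-augmented matrix and [A; C] is the row-augmented matrix. -/
/-!
Every `A + B K C` factors through both `[A B]` and `[A; C]`, which gives the upper bound. For
the lower bound, take `K` with `M = A + B K C` of maximal rank. If `rank M` were below both
bounds, some `b = B u` would lie outside the column space of `M` and some `c = Cᵀ v` outside
its row space; by duality the latter gives `x ∈ ker M` with `c ⬝ᵥ x ≠ 0`. Replacing `K` by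
`K + u vᵀ` adds `b cᵀ` to `M`; the new matrix sends `x` to a nonzero multiple of `b`, so its
range contains `b` and hence all of `range M`, and the rank goes up.
-/

open Matrix

namespace Matrix

variable {F : Type*} [Field F] {m n r q : Type*} [Fintype n] [Fintype r]

theorem exists_mulVec_eq_zero_dotProduct_ne_zero [Fintype m] (M : Matrix m n F) {c : n → F}
    (hc : c ∉ LinearMap.range M.vecMulLinear) : ∃ x, M *ᵥ x = 0 ∧ c ⬝ᵥ x ≠ 0 := by
  classical
  by_contra! h
  have hc' : dotProductEquiv F n c ∈ M.mulVecLin.ker.dualAnnihilator :=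
    (Submodule.mem_dualAnnihilator _).2 h
  rw [← LinearMap.range_dualMap_eq_dualAnnihilator_ker] at hc'
  obtain ⟨φ, hφ⟩ := hc'
  refine hc ⟨(dotProductEquiv F m).symm φ, (dotProductEquiv F n).injective ?_⟩
  refine LinearMap.ext fun x => ?_
  set w := (dotProductEquiv F m).symm φ
  calc (w ᵥ* M) ⬝ᵥ x = dotProductEquiv F m w (M *ᵥ x) := (dotProduct_mulVec w M x).symm
    _ = c ⬝ᵥ x := by rw [LinearEquiv.apply_symm_apply]; exact LinearMap.congr_fun hφ x

theorem rank_lt_rank_add_vecMulVec (M : Matrix m n F) {b : m → F} {c x : n → F}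
    (hb : b ∉ LinearMap.range M.mulVecLin) (hx : M *ᵥ x = 0) (hcx : c ⬝ᵥ x ≠ 0) :
    M.rank < (M + vecMulVec b c).rank := by
  have hmulVec (y : n → F) : (M + vecMulVec b c) *ᵥ y = M *ᵥ y + (c ⬝ᵥ y) • b := by
    rw [add_mulVec, vecMulVec_mulVec, op_smul_eq_smul]
  have hb' : b ∈ LinearMap.range (M + vecMulVec b c).mulVecLin :=
    ⟨(c ⬝ᵥ x)⁻¹ • x, by
      rw [mulVecLin_apply, mulVec_smul, hmulVec, hx, zero_add, smul_smul, inv_mul_cancel₀ hcx,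
        one_smul]⟩
  have hle : LinearMap.range M.mulVecLin ≤ LinearMap.range (M + vecMulVec b c).mulVecLin := by
    rintro _ ⟨y, rfl⟩
    have hy : M *ᵥ y = (M + vecMulVec b c) *ᵥ y - (c ⬝ᵥ y) • b := by
      rw [hmulVec, add_sub_cancel_right]
    rw [mulVecLin_apply, hy]
    exact sub_mem (LinearMap.mem_range_self _ y) (Submodule.smul_mem _ _ hb')
  exact Submodule.finrank_lt_finrank_of_lt (lt_of_le_of_ne hle fun h => hb (h ▸ hb'))

theorem rank_add_mul_le_rank_fromCols (A : Matrix m n F) (B : Matrix m r F) (Z : Matrix r n F) :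
    (A + B * Z).rank ≤ (fromCols A B).rank := by
  classical
  have h : fromCols A B * fromRows (1 : Matrix n n F) Z = A + B * Z := by
    rw [fromCols_mul_fromRows, Matrix.mul_one]
  exact h ▸ rank_mul_le_left _ _

theorem rank_add_mul_le_rank_fromRows [Fintype m] [Fintype q] (A : Matrix m n F)
    (C : Matrix q n F) (Y : Matrix m q F) : (A + Y * C).rank ≤ (fromRows A C).rank := by
  classical
  have h : fromCols (1 : Matrix m m F) Y * fromRows A C = A + Y * C := by
    rw [fromCols_mul_fromRows, Matrix.one_mul]
  exact h ▸ rank_mul_le_right _ _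

theorem rank_fromCols_le_of_range_le (A : Matrix m n F) (B : Matrix m r F) (Z : Matrix r n F)
    (h : LinearMap.range B.mulVecLin ≤ LinearMap.range (A + B * Z).mulVecLin) :
    (fromCols A B).rank ≤ (A + B * Z).rank := by
  refine Submodule.finrank_mono ?_
  rintro _ ⟨w, rfl⟩
  have hA : A *ᵥ (w ∘ Sum.inl) =
      (A + B * Z) *ᵥ (w ∘ Sum.inl) - B *ᵥ (Z *ᵥ (w ∘ Sum.inl)) := by
    rw [add_mulVec, mulVec_mulVec, add_sub_cancel_right]
  rw [mulVecLin_apply, fromCols_mulVec, hA]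
  exact add_mem (sub_mem (LinearMap.mem_range_self _ _) (h ⟨_, rfl⟩)) (h ⟨_, rfl⟩)

theorem rank_add_mul_mul_le_min [Fintype m] [Fintype q] (A : Matrix m n F) (B : Matrix m r F)
    (C : Matrix q n F) (K : Matrix r q F) :
    (A + B * K * C).rank ≤ min (fromCols A B).rank (fromRows A C).rank :=
  le_min (by simpa only [Matrix.mul_assoc] using rank_add_mul_le_rank_fromCols A B (K * C))
    (rank_add_mul_le_rank_fromRows A C (B * K))

theorem exists_rank_lt_rank_add_mul_mul [Fintype m] [Fintype q] (A : Matrix m n F)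
    (B : Matrix m r F) (C : Matrix q n F) (K : Matrix r q F)
    (h : (A + B * K * C).rank < min (fromCols A B).rank (fromRows A C).rank) :
    ∃ K' : Matrix r q F, (A + B * K * C).rank < (A + B * K' * C).rank := by
  set M := A + B * K * C
  have hcols : ¬ LinearMap.range B.mulVecLin ≤ LinearMap.range M.mulVecLin := fun hle => by
    have := rank_fromCols_le_of_range_le A B (K * C) (by rwa [← Matrix.mul_assoc])
    rw [← Matrix.mul_assoc] at this
    change _ ≤ M.rank at this
    omega
  have hMT : Mᵀ = Aᵀ + Cᵀ * (B * K)ᵀ := by rw [transpose_add, ← transpose_mul]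
  have hrows : ¬ LinearMap.range Cᵀ.mulVecLin ≤ LinearMap.range Mᵀ.mulVecLin := fun hle => by
    have := rank_fromCols_le_of_range_le Aᵀ Cᵀ (B * K)ᵀ (hMT ▸ hle)
    rw [← hMT, ← transpose_fromRows, rank_transpose, rank_transpose] at this
    omega
  obtain ⟨_, ⟨u, rfl⟩, hu⟩ := SetLike.not_le_iff_exists.1 hcols
  obtain ⟨_, ⟨v, rfl⟩, hv⟩ := SetLike.not_le_iff_exists.1 hrows
  rw [mulVecLin_transpose, mulVecLin_transpose, vecMulLinear_apply] at hv
  obtain ⟨x, hx, hvx⟩ := exists_mulVec_eq_zero_dotProduct_ne_zero M hv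
  refine ⟨K + vecMulVec u v, ?_⟩
  have hK' : A + B * (K + vecMulVec u v) * C = M + vecMulVec (B *ᵥ u) (v ᵥ* C) := by
    rw [Matrix.mul_add, Matrix.add_mul, mul_vecMulVec, vecMulVec_mul, add_assoc]
  rw [hK']
  exact rank_lt_rank_add_vecMulVec M hu hx hvx

end Matrix

theorem stmt_2_general {F : Type*} [Field F] {m r q : ℕ}
    (A : Matrix (Fin m) (Fin m) F) (B : Matrix (Fin m) (Fin r) F)
    (C : Matrix (Fin q) (Fin m) F) :
    IsGreatest {n : ℕ | ∃ K : Matrix (Fin r) (Fin q) F, (A + B * K * C).rank = n}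
      (min (fromCols A B).rank (fromRows A C).rank) := by
  set S := {n : ℕ | ∃ K : Matrix (Fin r) (Fin q) F, (A + B * K * C).rank = n}
  have hbound : min (fromCols A B).rank (fromRows A C).rank ∈ upperBounds S := by
    rintro _ ⟨K, rfl⟩
    exact rank_add_mul_mul_le_min A B C K
  refine ⟨?_, hbound⟩
  obtain ⟨K, hK⟩ : sSup S ∈ S := Nat.sSup_mem ⟨_, 0, rfl⟩ ⟨_, hbound⟩
  refine ⟨K, le_antisymm (rank_add_mul_mul_le_min A B C K) (not_lt.1 fun h => ?_)⟩
  obtain ⟨K', hK'⟩ := exists_rank_lt_rank_add_mul_mul A B C K h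
  exact (le_csSup ⟨_, hbound⟩ ⟨K', rfl⟩).not_gt (hK ▸ hK')

theorem stmt_2 {F : Type*} [Field F] [Infinite F] {m r q : ℕ}
    (A : Matrix (Fin m) (Fin m) F) (B : Matrix (Fin m) (Fin r) F)
    (C : Matrix (Fin q) (Fin m) F) :
    IsGreatest {n : ℕ | ∃ K : Matrix (Fin r) (Fin q) F, (A + B * K * C).rank = n}
      (min (fromCols A B).rank (fromRows A C).rank) :=
  stmt_2_general A B C
end

section
/- Let F be an infinite field, A ∈ F^{m×m}, B_i ∈ F^{m×r_i}, C_i ∈ F^{q_i×m} for i=1,…,v, λ ∈ F. Then det(λI − A − Σ_i B_i K_i C_i) = 0 for all choices K_i ∈ F^{r_i×q_i} if and only if the matrix λI − A − Σ_i B_i K_i C_i, regarded over the rational function field F(K) in indeterminate entries of the K_i, has rank strictly less than m. -/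
/-!
The determinant of `λI - A - ∑ Bᵢ Kᵢ Cᵢ` is the evaluation, at the entries of the `Kᵢ`, of the
determinant of the same matrix with indeterminate gains, a polynomial over `F`. Since `F` is
infinite, this polynomial vanishes at every point iff it is zero; since `F[K]` embeds into `F(K)`,
it is zero iff the generic matrix is singular over `F(K)`, i.e. has rank `< m`.
-/

open Matrix

namespace Matrix

theorem rank_lt_card_iff_det_eq_zero {K n : Type*} [Field K] [Fintype n] [DecidableEq n]
    (A : Matrix n n K) : A.rank < Fintype.card n ↔ A.det = 0 := by
  rw [← not_iff_not, not_lt, ← ne_eq, ← isUnit_iff_ne_zero, ← isUnit_iff_isUnit_det,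
    ← linearIndependent_rows_iff_isUnit, linearIndependent_iff_card_eq_finrank_span,
    Set.finrank, ← rank_eq_finrank_span_row]
  exact ⟨fun h => le_antisymm h A.rank_le_card_height, fun h => h.le⟩

theorem det_map_eq_zero_iff {R S n : Type*} [CommRing R] [CommRing S] [Fintype n] [DecidableEq n]
    {f : R →+* S} (hf : Function.Injective f) (M : Matrix n n R) :
    (M.map f).det = 0 ↔ M.det = 0 := by
  rw [← RingHom.mapMatrix_apply, ← RingHom.map_det, map_eq_zero_iff f hf]

section ClosedLoop

variable {n ι : Type*} [Fintype n] [DecidableEq n] [Fintype ι]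
  {r q : ι → Type*} [∀ i, Fintype (r i)] [∀ i, Fintype (q i)]

def closedLoop {S : Type*} [CommRing S] (l : S) (A : Matrix n n S) (B : ∀ i, Matrix n (r i) S)
    (K : ∀ i, Matrix (r i) (q i) S) (C : ∀ i, Matrix (q i) n S) : Matrix n n S :=
  l • 1 - A - ∑ i, B i * K i * C i

theorem map_closedLoop {S T : Type*} [CommRing S] [CommRing T] (f : S →+* T) (l : S)
    (A : Matrix n n S) (B : ∀ i, Matrix n (r i) S) (K : ∀ i, Matrix (r i) (q i) S)
    (C : ∀ i, Matrix (q i) n S) :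
    (closedLoop l A B K C).map f =
      closedLoop (f l) (A.map f) (fun i => (B i).map f) (fun i => (K i).map f)
        (fun i => (C i).map f) := by
  simp only [closedLoop, ← RingHom.mapMatrix_apply, map_sub, map_sum]
  simp [Matrix.map_smul']

variable {F : Type*} [Field F]

noncomputable def genericGain (i : ι) :
    Matrix (r i) (q i) (MvPolynomial ((i : ι) × (r i × q i)) F) :=
  of fun a b => MvPolynomial.X ⟨i, (a, b)⟩

noncomputable def genericClosedLoop (l : F) (A : Matrix n n F) (B : ∀ i, Matrix n (r i) F)
    (C : ∀ i, Matrix (q i) n F) : Matrix n n (MvPolynomial ((i : ι) × (r i × q i)) F) :=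
  closedLoop (MvPolynomial.C l) (A.map MvPolynomial.C) (fun i => (B i).map MvPolynomial.C)
    genericGain (fun i => (C i).map MvPolynomial.C)

theorem map_eval_genericClosedLoop (l : F) (A : Matrix n n F) (B : ∀ i, Matrix n (r i) F)
    (C : ∀ i, Matrix (q i) n F) (y : ((i : ι) × (r i × q i)) → F) :
    (genericClosedLoop l A B C).map (MvPolynomial.eval y) =
      closedLoop l A B (fun i => of fun a b => y ⟨i, (a, b)⟩) C := by
  simp only [genericClosedLoop, map_closedLoop, Matrix.map_map, Function.comp_def,
    MvPolynomial.eval_C, map_id']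
  congr
  funext i
  ext a b
  simp [genericGain]

theorem forall_det_closedLoop_eq_zero_iff [Infinite F] (l : F) (A : Matrix n n F)
    (B : ∀ i, Matrix n (r i) F) (C : ∀ i, Matrix (q i) n F) :
    (∀ K, (closedLoop l A B K C).det = 0) ↔ (genericClosedLoop l A B C).det = 0 := by
  have eval_det (y : ((i : ι) × (r i × q i)) → F) :
      MvPolynomial.eval y (genericClosedLoop l A B C).det =
        (closedLoop l A B (fun i => of fun a b => y ⟨i, (a, b)⟩) C).det := by
    rw [RingHom.map_det, RingHom.mapMatrix_apply, map_eval_genericClosedLoop]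
  refine ⟨fun h => MvPolynomial.funext fun y => ?_, fun h K => ?_⟩
  · rw [map_zero, eval_det, h]
  · rw [← map_zero (MvPolynomial.eval fun s : (i : ι) × (r i × q i) => K s.1 s.2.1 s.2.2), ← h,
      eval_det]
    rfl

end ClosedLoop

end Matrix

theorem stmt_11 {F : Type*} [Field F] [Infinite F] {v m : ℕ} {r q : Fin v → ℕ}
    (A : Matrix (Fin m) (Fin m) F)
    (B : ∀ i, Matrix (Fin m) (Fin (r i)) F)
    (C : ∀ i, Matrix (Fin (q i)) (Fin m) F) (l : F) :
    (∀ K : ∀ i, Matrix (Fin (r i)) (Fin (q i)) F,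
        (l • (1 : Matrix (Fin m) (Fin m) F) - A - ∑ i, B i * K i * C i).det = 0) ↔
      (let R := FractionRing (MvPolynomial ((i : Fin v) × (Fin (r i) × Fin (q i))) F)
       let ι : F →+* R :=
         (algebraMap (MvPolynomial ((i : Fin v) × (Fin (r i) × Fin (q i))) F) R).comp
           MvPolynomial.C
       let K : ∀ i, Matrix (Fin (r i)) (Fin (q i)) R := fun i =>
         Matrix.of fun a b =>
           algebraMap (MvPolynomial ((i : Fin v) × (Fin (r i) × Fin (q i))) F) R
             (MvPolynomial.X ⟨i, (a, b)⟩)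
       (ι l • (1 : Matrix (Fin m) (Fin m) R) - A.map ⇑ι -
          ∑ i, (B i).map ⇑ι * K i * (C i).map ⇑ι).rank < m) := by
  let P := MvPolynomial ((i : Fin v) × (Fin (r i) × Fin (q i))) F
  change (∀ K, (closedLoop l A B K C).det = 0) ↔ (closedLoop _ _ _ _ _).rank < m
  rw [forall_det_closedLoop_eq_zero_iff,
    ← det_map_eq_zero_iff (IsFractionRing.injective P (FractionRing P)),
    ← rank_lt_card_iff_det_eq_zero, Fintype.card_fin, genericClosedLoop, map_closedLoop]
  rfl
end

section
/- Let F be a field, A ∈ F^{m×m}, B_i ∈ F^{m×r_i}, C_i ∈ F^{q_i×m} for i = 1,…,v, and λ ∈ F. If there exists a subset V ⊆ {1,…,v} with rank [[λI − A, B_V],[C_{V^c}, 0]] < m, then for all K_i ∈ F^{r_i×q_i}, det(λI − A − Σ_{i=1}^{v} B_i K_i C_i) = 0. -/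
open Matrix

/-- The block matrix `[[A, B_V],[C_{V^c}, 0]]` associated to a cut `V`. -/
def cutMatrix {F : Type*} [Field F] {v m : ℕ} {r q : Fin v → ℕ}
    (A : Matrix (Fin m) (Fin m) F)
    (B : ∀ i, Matrix (Fin m) (Fin (r i)) F)
    (C : ∀ i, Matrix (Fin (q i)) (Fin m) F)
    (V : Finset (Fin v)) :
    Matrix (Fin m ⊕ ((i : {i : Fin v // i ∉ V}) × Fin (q i.1)))
      (Fin m ⊕ ((i : {i : Fin v // i ∈ V}) × Fin (r i.1))) F :=
  fromBlocks A
    (Matrix.of fun i p => B p.1.1 i p.2)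
    (Matrix.of fun p j => C p.1.1 p.2 j) 0

theorem stmt_19 {F : Type*} [Field F] {v m : ℕ} {r q : Fin v → ℕ}
    (A : Matrix (Fin m) (Fin m) F)
    (B : ∀ i, Matrix (Fin m) (Fin (r i)) F)
    (C : ∀ i, Matrix (Fin (q i)) (Fin m) F) (l : F)
    (V : Finset (Fin v))
    (hV : (cutMatrix (l • (1 : Matrix (Fin m) (Fin m) F) - A) B C V).rank < m) :
    ∀ K : ∀ i, Matrix (Fin (r i)) (Fin (q i)) F,
      (l • (1 : Matrix (Fin m) (Fin m) F) - A - ∑ i, B i * K i * C i).det = 0 := by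
  classical
  intro K
  set A' : Matrix (Fin m) (Fin m) F := l • (1 : Matrix (Fin m) (Fin m) F) - A with hA'
  set N := cutMatrix A' B C V with hNdef
  -- the kernel of N has dimension bigger than the number of columns of the B-block
  have hker : Fintype.card ((i : {i : Fin v // i ∈ V}) × Fin (r i.1))
      < Module.finrank F (LinearMap.ker N.mulVecLin) := by
    have h1 := N.mulVecLin.finrank_range_add_finrank_ker
    rw [show Module.finrank F (LinearMap.range N.mulVecLin) = N.rank from rfl] at h1
    rw [show Module.finrank F ((Fin m ⊕ ((i : {i : Fin v // i ∈ V}) × Fin (r i.1))) → F)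
        = m + Fintype.card ((i : {i : Fin v // i ∈ V}) × Fin (r i.1)) by
        simp [Module.finrank_pi]] at h1
    omega
  -- the linear map `w ↦ (wᵤ + K C wₓ)` on the B-block coordinates
  let ψ : ((Fin m ⊕ ((i : {i : Fin v // i ∈ V}) × Fin (r i.1))) → F)
      →ₗ[F] (((i : {i : Fin v // i ∈ V}) × Fin (r i.1)) → F) :=
    { toFun := fun w p => w (Sum.inr p)
        + ∑ s, K p.1.1 p.2 s * (∑ j, C p.1.1 s j * w (Sum.inl j))
      map_add' := by
        intro w₁ w₂
        funext p
        simp only [Pi.add_apply]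
        simp [mul_add, add_mul, Finset.sum_add_distrib]
        ring
      map_smul' := by
        intro c w
        funext p
        simp only [Pi.smul_apply, smul_eq_mul, RingHom.id_apply]
        simp [Finset.mul_sum, mul_add, mul_left_comm, mul_assoc] }
  -- ψ restricted to the kernel of N has nontrivial kernel
  have hne : LinearMap.ker (ψ.comp (LinearMap.ker N.mulVecLin).subtype) ≠ ⊥ := by
    intro h
    have hinj : Function.Injective (ψ.comp (LinearMap.ker N.mulVecLin).subtype) :=
      LinearMap.ker_eq_bot.mp h
    have h2 := LinearMap.finrank_le_finrank_of_injective hinj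
    rw [show Module.finrank F ((((i : {i : Fin v // i ∈ V}) × Fin (r i.1))) → F)
        = Fintype.card (((i : {i : Fin v // i ∈ V}) × Fin (r i.1))) by
        simp [Module.finrank_pi]] at h2
    omega
  obtain ⟨x, hxker, hxne⟩ := Submodule.ne_bot_iff _ |>.mp hne
  set w : (Fin m ⊕ ((i : {i : Fin v // i ∈ V}) × Fin (r i.1))) → F := x.1 with hwdef
  have hw : N.mulVec w = 0 := by
    have := x.2
    rwa [LinearMap.mem_ker, mulVecLin_apply] at this
  have hψw : ∀ p : ((i : {i : Fin v // i ∈ V}) × Fin (r i.1)),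
      w (Sum.inr p) + ∑ s, K p.1.1 p.2 s * (∑ j, C p.1.1 s j * w (Sum.inl j)) = 0 := by
    intro p
    have h := LinearMap.mem_ker.mp hxker
    exact congrFun h p
  have hwne : w ≠ 0 := fun h => hxne (Subtype.ext h)
  set x0 : Fin m → F := fun j => w (Sum.inl j) with hx0def
  -- row equations
  have hrow1 : ∀ i : Fin m,
      ∑ j, A' i j * x0 j
        + ∑ p : ((i : {i : Fin v // i ∈ V}) × Fin (r i.1)), B p.1.1 i p.2 * w (Sum.inr p)
        = 0 := by
    intro i
    have h := congrFun hw (Sum.inl i)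
    simpa [Matrix.mulVec, dotProduct, Fintype.sum_sum_type, N, cutMatrix] using h
  have hrow2 : ∀ p : ((i : {i : Fin v // i ∉ V}) × Fin (q i.1)),
      ∑ j, C p.1.1 p.2 j * x0 j = 0 := by
    intro p
    have h := congrFun hw (Sum.inr p)
    simpa [Matrix.mulVec, dotProduct, Fintype.sum_sum_type, N, cutMatrix] using h
  -- x0 is nonzero
  have hx0ne : x0 ≠ 0 := by
    intro h
    apply hwne
    funext s
    cases s with
    | inl j => exact congrFun h j
    | inr p =>
      have := hψw p
      have hz : ∀ j, w (Sum.inl j) = 0 := fun j => congrFun h j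
      simpa [hz] using this
  -- the closed-loop matrix kills x0
  rw [← Matrix.exists_mulVec_eq_zero_iff]
  refine ⟨x0, hx0ne, ?_⟩
  funext i
  have hsplit : ∑ t : Fin v, ((B t * K t * C t).mulVec x0) i
      = ∑ t ∈ V, ((B t * K t * C t).mulVec x0) i
        + ∑ t ∈ Vᶜ, ((B t * K t * C t).mulVec x0) i :=
    (Finset.sum_add_sum_compl V _).symm
  have hcompl : ∀ t ∈ Vᶜ, ((B t * K t * C t).mulVec x0) i = 0 := by
    intro t ht
    rw [Finset.mem_compl] at ht
    have hc : (C t).mulVec x0 = 0 := by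
      funext s
      exact hrow2 ⟨⟨t, ht⟩, s⟩
    rw [← Matrix.mulVec_mulVec, ← Matrix.mulVec_mulVec, hc]
    simp
  have hinV : ∀ (t : Fin v) (ht : t ∈ V),
      ((B t * K t * C t).mulVec x0) i = ∑ s, B t i s * (- w (Sum.inr ⟨⟨t, ht⟩, s⟩)) := by
    intro t ht
    rw [← Matrix.mulVec_mulVec, ← Matrix.mulVec_mulVec]
    have hk : (K t).mulVec ((C t).mulVec x0) = fun s => - w (Sum.inr ⟨⟨t, ht⟩, s⟩) := by
      funext s
      have h := hψw ⟨⟨t, ht⟩, s⟩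
      simp only [Matrix.mulVec, dotProduct] at h ⊢
      simp only [hx0def]
      exact eq_neg_of_add_eq_zero_left ((add_comm _ _).trans h)
    rw [hk]
    simp [Matrix.mulVec, dotProduct]
  -- put everything together
  have hMV : ((l • (1 : Matrix (Fin m) (Fin m) F) - A - ∑ t, B t * K t * C t).mulVec x0) i
      = (A'.mulVec x0) i - ∑ t : Fin v, ((B t * K t * C t).mulVec x0) i := by
    rw [← hA', Matrix.sub_mulVec, Pi.sub_apply]
    congr 1
    simp only [Matrix.mulVec, dotProduct, Matrix.sum_apply, Finset.sum_mul]
    exact Finset.sum_comm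
  rw [Pi.zero_apply, hMV, hsplit]
  rw [Finset.sum_congr rfl hcompl]
  have hsumV : ∑ t ∈ V, ((B t * K t * C t).mulVec x0) i
      = - ∑ p : ((i : {i : Fin v // i ∈ V}) × Fin (r i.1)), B p.1.1 i p.2 * w (Sum.inr p) := by
    calc ∑ t ∈ V, ((B t * K t * C t).mulVec x0) i
        = ∑ t : {i : Fin v // i ∈ V}, ((B t.1 * K t.1 * C t.1).mulVec x0) i :=
          (Finset.sum_coe_sort V _).symm
      _ = ∑ t : {i : Fin v // i ∈ V}, ∑ s, B t.1 i s * (- w (Sum.inr ⟨t, s⟩)) :=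
          Finset.sum_congr rfl (fun t _ => hinV t.1 t.2)
      _ = - ∑ p : ((i : {i : Fin v // i ∈ V}) × Fin (r i.1)), B p.1.1 i p.2 * w (Sum.inr p) := by
          rw [show (∑ p : ((i : {i : Fin v // i ∈ V}) × Fin (r i.1)),
              B p.1.1 i p.2 * w (Sum.inr p))
              = ∑ t : {i : Fin v // i ∈ V}, ∑ s, B t.1 i s * w (Sum.inr ⟨t, s⟩) by
            rw [← Finset.univ_sigma_univ, Finset.sum_sigma]]
          simp [mul_neg, Finset.sum_neg_distrib]
  have hA : (A'.mulVec x0) i = ∑ j, A' i j * x0 j := by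
    simp [Matrix.mulVec, dotProduct]
  rw [hsumV, hA, Finset.sum_const_zero]
  rw [add_zero, sub_neg_eq_add]
  exact hrow1 i
end
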